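/- arXiv:2107.06936 — 3 statements merged into one kernel-verified Lean document; each statement's English description precedes it below -/
import Mathlib

section
/- Let u(s)=−s²/(2Δ) with Δ>0, and let c := (√((2κΔ+α−1)²+8κΔ) − (2κΔ+α−1))/(4κ). Then the fixed-point system q=(r+h²)/(2κ+r−r̄)², ρ=1/(2κ+r−r̄)+(r+h²)/(2κ+r−r̄)², r=α·𝔼[(𝔼_ξ u'(θ)e^{u(θ)}/𝔼_ξ e^{u(θ)})²], r̄=α·𝔼[𝔼_ξ(u''(θ)+u'(θ)²)e^{u(θ)}/𝔼_ξ e^{u(θ)}] has a unique solution with 0≤q<ρ, given explicitly by q = c²(h²(Δ+c)²+Δ*α)/((Δ+c)²−αc²), ρ = q+c, r = α(Δ*+q)/(Δ+c)², and r̄ = r − α/(Δ+c); moreover this q is positive whenever h²+Δ*>0. -/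
open MeasureTheory ProbabilityTheory Real Filter

noncomputable section

/-- Standard gaussian measure on `ℝ`. -/
def stdG : Measure ℝ := gaussianReal 0 1

/-- Law of the disorder `(G, z)`: i.i.d. standard gaussian matrix entries and
i.i.d. `N(0, Δ*)` noise. -/
def disorder (M N : ℕ) (Δ : ℝ) : Measure ((Fin M → Fin N → ℝ) × (Fin M → ℝ)) :=
  (Measure.pi fun _ : Fin M => Measure.pi fun _ : Fin N => gaussianReal 0 1).prod
    (Measure.pi fun _ : Fin M => gaussianReal 0 Δ.toNNReal)

/-- `S_k(σ) = (Ḡ σ)_k` with `Ḡ = G/√N`. -/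
def Sk {M N : ℕ} (G : Fin M → Fin N → ℝ) (σ : Fin N → ℝ) (k : Fin M) : ℝ :=
  (∑ i, G k i * σ i) / Real.sqrt (N : ℝ)

/-- Assumption 1 of the paper on the log-likelihood `u`. -/
def Assumption1 (u : ℝ → ℝ) (d : ℝ) : Prop :=
  ConcaveOn ℝ Set.univ u ∧ (∀ s, u s ≤ 0) ∧ ContDiff ℝ 4 u ∧
  |u 0| ≤ d ∧ |deriv u 0| ≤ d ∧
  (∀ s, |iteratedDeriv 2 u s| ≤ d) ∧ (∀ s, |iteratedDeriv 3 u s| ≤ d) ∧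
  (∀ s, |iteratedDeriv 4 u s| ≤ d) ∧
  (∀ s, |deriv u s| ≤ d * (1 + Real.sqrt |u s|))

/-- `θ = z̃ √(Δ*+q) + ξ √(ρ−q)`. -/
def theta (Δs q ρ zt ξ : ℝ) : ℝ := zt * Real.sqrt (Δs + q) + ξ * Real.sqrt (ρ - q)

/-- `Φ(q,ρ) = α 𝔼 (𝔼_ξ u'(θ) e^{u(θ)} / 𝔼_ξ e^{u(θ)})²`. -/
def PhiR (u : ℝ → ℝ) (α Δs q ρ : ℝ) : ℝ :=
  α * ∫ zt, ((∫ ξ, deriv u (theta Δs q ρ zt ξ) * Real.exp (u (theta Δs q ρ zt ξ)) ∂stdG) /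
      (∫ ξ, Real.exp (u (theta Δs q ρ zt ξ)) ∂stdG)) ^ 2 ∂stdG

/-- `Φ̄(q,ρ) = α 𝔼 [𝔼_ξ (u''(θ)+u'(θ)²) e^{u(θ)} / 𝔼_ξ e^{u(θ)}]`. -/
def PhiQ (u : ℝ → ℝ) (α Δs q ρ : ℝ) : ℝ :=
  α * ∫ zt, (∫ ξ, (iteratedDeriv 2 u (theta Δs q ρ zt ξ) + (deriv u (theta Δs q ρ zt ξ)) ^ 2)
        * Real.exp (u (theta Δs q ρ zt ξ)) ∂stdG) /
      (∫ ξ, Real.exp (u (theta Δs q ρ zt ξ)) ∂stdG) ∂stdG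

/-- The fixed-point system (12)-(15), on the domain `0 ≤ q < ρ`. -/
def isFixedPoint (u : ℝ → ℝ) (α κ h Δs : ℝ) (p : ℝ × ℝ × ℝ × ℝ) : Prop :=
  0 ≤ p.1 ∧ p.1 < p.2.1 ∧
  p.1 = (p.2.2.1 + h ^ 2) / (2 * κ + p.2.2.1 - p.2.2.2) ^ 2 ∧
  p.2.1 = 1 / (2 * κ + p.2.2.1 - p.2.2.2) + (p.2.2.1 + h ^ 2) / (2 * κ + p.2.2.1 - p.2.2.2) ^ 2 ∧
  p.2.2.1 = PhiR u α Δs p.1 p.2.1 ∧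
  p.2.2.2 = PhiQ u α Δs p.1 p.2.1

/-- The replica-symmetric free energy functional `F(q,ρ)`. -/
def Ffunc (u : ℝ → ℝ) (α κ h Δs q ρ : ℝ) : ℝ :=
  α * (∫ zt, Real.log (∫ ξ, Real.exp (u (theta Δs q ρ zt ξ)) ∂stdG) ∂stdG) +
  (1 / 2) * (Real.log (ρ - q) + h ^ 2 * (ρ - q) + ρ / (ρ - q) - 2 * κ * ρ +
    Real.log (2 * Real.pi))

/-- The Shcherbina–Tirozzi Hamiltonian. -/
def Ham {M N : ℕ} (u : ℝ → ℝ) (h κ : ℝ) (G : Fin M → Fin N → ℝ) (z : Fin M → ℝ)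
    (σ : Fin N → ℝ) : ℝ :=
  (∑ k, u (Sk G σ k + z k)) - h * (∑ i, σ i) - κ * (∑ i, (σ i) ^ 2)

/-- Partition function. -/
def Zpart {M N : ℕ} (u : ℝ → ℝ) (h κ : ℝ) (G : Fin M → Fin N → ℝ) (z : Fin M → ℝ) : ℝ :=
  ∫ σ : Fin N → ℝ, Real.exp (Ham u h κ G z σ)

/-- Free energy `F_N = (1/N) ln Z`. -/
def freeEnergy {M N : ℕ} (u : ℝ → ℝ) (h κ : ℝ) (G : Fin M → Fin N → ℝ)
    (z : Fin M → ℝ) : ℝ :=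
  (1 / (N : ℝ)) * Real.log (Zpart u h κ G z)

/-- Gibbs expectation of a one-replica observable. -/
def gibbs1 {M N : ℕ} (u : ℝ → ℝ) (h κ : ℝ) (G : Fin M → Fin N → ℝ) (z : Fin M → ℝ)
    (f : (Fin N → ℝ) → ℝ) : ℝ :=
  (∫ σ : Fin N → ℝ, f σ * Real.exp (Ham u h κ G z σ)) / Zpart u h κ G z

/-- Gibbs expectation of a two-replica observable. -/
def gibbs2 {M N : ℕ} (u : ℝ → ℝ) (h κ : ℝ) (G : Fin M → Fin N → ℝ) (z : Fin M → ℝ)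
    (f : (Fin N → ℝ) → (Fin N → ℝ) → ℝ) : ℝ :=
  (∫ σ1 : Fin N → ℝ, ∫ σ2 : Fin N → ℝ,
      f σ1 σ2 * Real.exp (Ham u h κ G z σ1 + Ham u h κ G z σ2)) / (Zpart u h κ G z) ^ 2


/-!
For the quadratic loss, `e^{u(θ)}` is a Gaussian likelihood in `θ`, and under `ξ` the variable `θ`
is `N(a, s)` with `a = z̃ √(Δ* + q)` and `s = ρ - q`. By conjugacy the `e^{u(θ)}`-weighted
`ξ`-averages are expectations under the posterior `N(a Δ / (Δ + s), s Δ / (Δ + s))`, which gives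
`r = α (Δ* + q) / (Δ + s)²` and `r̄ = r - α / (Δ + s)`. Then `2κ + r - r̄ = 2κ + α / (Δ + s)`, so
the equation `ρ - q = 1 / (2κ + r - r̄)` is the quadratic `2κ s² + (2κΔ + α - 1) s - Δ = 0`, whose
only positive root is `c`; what remains of the equation for `q` is linear in `q`.
-/

open scoped NNReal

theorem integral_sq_gaussianReal (μ : ℝ) (v : ℝ≥0) :
    ∫ x, x ^ 2 ∂gaussianReal μ v = μ ^ 2 + v := by
  have h_var := variance_eq_sub (memLp_id_gaussianReal (μ := μ) (v := v) 2)
  simp only [variance_id_gaussianReal, Pi.pow_apply, id_eq, integral_id_gaussianReal] at h_var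
  linarith

theorem integral_const_add_mul_sq_gaussianReal (μ : ℝ) (v : ℝ≥0) (A C : ℝ) :
    ∫ x, (A + C * x ^ 2) ∂gaussianReal μ v = A + C * (μ ^ 2 + v) := by
  have h_sq : Integrable (fun x => x ^ 2) (gaussianReal μ v) :=
    (memLp_id_gaussianReal 2).integrable_sq
  rw [integral_add (integrable_const A) (h_sq.const_mul C), integral_const, integral_const_mul,
    integral_sq_gaussianReal]
  simp

theorem gaussianReal_map_const_add_mul_const (a b : ℝ) :
    (gaussianReal 0 1).map (fun ξ => a + ξ * b) = gaussianReal a (b ^ 2).toNNReal := by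
  have : (fun ξ : ℝ => a + ξ * b) = (a + ·) ∘ (· * b) := rfl
  rw [this, ← Measure.map_map (by fun_prop) (by fun_prop), gaussianReal_map_mul_const,
    gaussianReal_map_const_add]
  congr 1
  · ring
  · ext
    simp [sq_nonneg]

theorem gaussianPDFReal_mul_exp_neg_sq_div (a : ℝ) {v : ℝ≥0} (hv : v ≠ 0) {Δ : ℝ} (hΔ : 0 < Δ)
    (y : ℝ) :
    gaussianPDFReal a v y * exp (-y ^ 2 / (2 * Δ)) =
      √(Δ / (Δ + v)) * exp (-a ^ 2 / (2 * (Δ + v))) *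
        gaussianPDFReal (a * Δ / (Δ + v)) (v * Δ / (Δ + v)).toNNReal y := by
  have hv : (0 : ℝ) < v := NNReal.coe_pos.2 (pos_iff_ne_zero.2 hv)
  simp only [gaussianPDFReal, Real.coe_toNNReal _ (by positivity : (0 : ℝ) ≤ v * Δ / (Δ + v))]
  have h_sqrt : √(2 * π * (v * Δ / (Δ + v))) = √(2 * π * v) * √(Δ / (Δ + v)) := by
    rw [← sqrt_mul (by positivity)]
    ring_nf
  -- completing the square in `y`
  have h_exp : -(y - a) ^ 2 / (2 * v) + -y ^ 2 / (2 * Δ) =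
      -a ^ 2 / (2 * (Δ + v)) + -(y - a * Δ / (Δ + v)) ^ 2 / (2 * (v * Δ / (Δ + v))) := by
    field_simp
    ring
  have : √(Δ / (Δ + v)) ≠ 0 := by positivity
  rw [h_sqrt, mul_inv, mul_assoc, ← exp_add, h_exp, exp_add]
  field_simp

theorem integral_mul_exp_neg_sq_div_gaussianReal (a : ℝ) {v : ℝ≥0} (hv : v ≠ 0) {Δ : ℝ}
    (hΔ : 0 < Δ) (f : ℝ → ℝ) :
    ∫ y, f y * exp (-y ^ 2 / (2 * Δ)) ∂gaussianReal a v =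
      √(Δ / (Δ + v)) * exp (-a ^ 2 / (2 * (Δ + v))) *
        ∫ y, f y ∂gaussianReal (a * Δ / (Δ + v)) (v * Δ / (Δ + v)).toNNReal := by
  have hw : (v * Δ / (Δ + v)).toNNReal ≠ 0 := by
    have : (0 : ℝ) < v := NNReal.coe_pos.2 (pos_iff_ne_zero.2 hv)
    rw [Ne, Real.toNNReal_eq_zero, not_le]
    positivity
  rw [integral_gaussianReal_eq_integral_smul hv, integral_gaussianReal_eq_integral_smul hw,
    ← integral_const_mul]
  congr 1 with y
  rw [smul_eq_mul, smul_eq_mul, ← mul_assoc, mul_comm _ (f y), mul_assoc, mul_assoc,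
    gaussianPDFReal_mul_exp_neg_sq_div a hv hΔ]
  ring

theorem integral_mul_exp_neg_sq_div_div_integral_exp_neg_sq_div (a : ℝ) {v : ℝ≥0} (hv : v ≠ 0)
    {Δ : ℝ} (hΔ : 0 < Δ) (f : ℝ → ℝ) :
    (∫ y, f y * exp (-y ^ 2 / (2 * Δ)) ∂gaussianReal a v) /
        ∫ y, exp (-y ^ 2 / (2 * Δ)) ∂gaussianReal a v =
      ∫ y, f y ∂gaussianReal (a * Δ / (Δ + v)) (v * Δ / (Δ + v)).toNNReal := by
  have h_norm := integral_mul_exp_neg_sq_div_gaussianReal a hv hΔ fun _ => 1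
  simp only [one_mul, integral_const, probReal_univ, smul_eq_mul, mul_one] at h_norm
  have : (0 : ℝ) < v := NNReal.coe_pos.2 (pos_iff_ne_zero.2 hv)
  rw [h_norm, integral_mul_exp_neg_sq_div_gaussianReal a hv hΔ,
    mul_div_cancel_left₀ _ (by positivity)]

theorem integral_theta {Δs q ρ : ℝ} (hqρ : q < ρ) (zt : ℝ) (F : ℝ → ℝ) :
    ∫ ξ, F (theta Δs q ρ zt ξ) ∂stdG =
      ∫ y, F y ∂gaussianReal (zt * √(Δs + q)) (ρ - q).toNNReal := by
  have hb : √(ρ - q) ≠ 0 := (sqrt_pos.2 (sub_pos.2 hqρ)).ne'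
  have h_emb : MeasurableEmbedding fun ξ => zt * √(Δs + q) + ξ * √(ρ - q) :=
    ((Homeomorph.mulRight₀ _ hb).trans (Homeomorph.addLeft _)).measurableEmbedding
  rw [← sq_sqrt (sub_pos.2 hqρ).le, ← gaussianReal_map_const_add_mul_const, h_emb.integral_map]
  rfl

theorem integral_theta_mul_exp_div_integral_exp {Δs q ρ Δ : ℝ} (hΔ : 0 < Δ) (hqρ : q < ρ)
    (zt : ℝ) (g : ℝ → ℝ) :
    (∫ ξ, g (theta Δs q ρ zt ξ) * exp (-theta Δs q ρ zt ξ ^ 2 / (2 * Δ)) ∂stdG) /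
        ∫ ξ, exp (-theta Δs q ρ zt ξ ^ 2 / (2 * Δ)) ∂stdG =
      ∫ y, g y ∂gaussianReal (zt * √(Δs + q) * Δ / (Δ + (ρ - q)))
        ((ρ - q) * Δ / (Δ + (ρ - q))).toNNReal := by
  have hv : (ρ - q).toNNReal ≠ 0 := by simpa using hqρ
  rw [integral_theta hqρ zt (fun y => g y * exp (-y ^ 2 / (2 * Δ))),
    integral_theta hqρ zt (fun y => exp (-y ^ 2 / (2 * Δ))),
    integral_mul_exp_neg_sq_div_div_integral_exp_neg_sq_div _ hv hΔ,
    Real.coe_toNNReal _ (sub_pos.2 hqρ).le]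

theorem deriv_neg_sq_div (Δ : ℝ) : deriv (fun s : ℝ => -(s ^ 2) / (2 * Δ)) = fun s => -s / Δ := by
  ext s
  simp only [deriv_div_const, deriv.fun_neg', differentiableAt_fun_id, deriv_fun_pow,
    Nat.cast_ofNat, Nat.add_one_sub_one, pow_one, deriv_id'', mul_one]
  ring

theorem iteratedDeriv_two_neg_sq_div (Δ : ℝ) :
    iteratedDeriv 2 (fun s : ℝ => -(s ^ 2) / (2 * Δ)) = fun _ => -1 / Δ := by
  ext s
  simp only [iteratedDeriv_div_const, iteratedDeriv_fun_neg, iteratedDeriv_pow,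
    Nat.descFactorial_succ, Nat.add_one_sub_one, tsub_zero, Nat.descFactorial_zero, mul_one,
    one_mul, Nat.cast_ofNat, tsub_self, pow_zero]
  ring

theorem PhiR_neg_sq_div {Δ : ℝ} (hΔ : 0 < Δ) (α : ℝ) {Δs q ρ : ℝ} (hq : 0 ≤ Δs + q)
    (hqρ : q < ρ) :
    PhiR (fun s => -(s ^ 2) / (2 * Δ)) α Δs q ρ = α * (Δs + q) / (Δ + (ρ - q)) ^ 2 := by
  have hD : 0 < Δ + (ρ - q) := by linarith
  have h_avg : ∀ zt,
      (∫ ξ, -theta Δs q ρ zt ξ / Δ * exp (-theta Δs q ρ zt ξ ^ 2 / (2 * Δ)) ∂stdG) /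
        ∫ ξ, exp (-theta Δs q ρ zt ξ ^ 2 / (2 * Δ)) ∂stdG =
      -(√(Δs + q) / (Δ + (ρ - q))) * zt := by
    intro zt
    rw [integral_theta_mul_exp_div_integral_exp hΔ hqρ zt (fun y => -y / Δ), integral_div,
      integral_neg, integral_id_gaussianReal]
    field_simp
  simp only [PhiR, deriv_neg_sq_div, h_avg]
  simp only [stdG, mul_pow, integral_const_mul, integral_sq_gaussianReal]
  rw [neg_sq, div_pow, sq_sqrt hq]
  push_cast
  ring

theorem PhiQ_neg_sq_div {Δ : ℝ} (hΔ : 0 < Δ) (α : ℝ) {Δs q ρ : ℝ} (hq : 0 ≤ Δs + q)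
    (hqρ : q < ρ) :
    PhiQ (fun s => -(s ^ 2) / (2 * Δ)) α Δs q ρ =
      α * (Δs + q) / (Δ + (ρ - q)) ^ 2 - α / (Δ + (ρ - q)) := by
  have hD : 0 < Δ + (ρ - q) := by linarith
  have h_avg : ∀ zt,
      (∫ ξ, (-1 / Δ + (-theta Δs q ρ zt ξ / Δ) ^ 2) *
          exp (-theta Δs q ρ zt ξ ^ 2 / (2 * Δ)) ∂stdG) /
        ∫ ξ, exp (-theta Δs q ρ zt ξ ^ 2 / (2 * Δ)) ∂stdG =
      -1 / (Δ + (ρ - q)) + (Δs + q) / (Δ + (ρ - q)) ^ 2 * zt ^ 2 := by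
    intro zt
    have h_poly : (fun y => -1 / Δ + (-y / Δ) ^ 2) = fun y => -1 / Δ + 1 / Δ ^ 2 * y ^ 2 := by
      ext y
      ring
    rw [integral_theta_mul_exp_div_integral_exp hΔ hqρ zt (fun y => -1 / Δ + (-y / Δ) ^ 2),
      h_poly, integral_const_add_mul_sq_gaussianReal, Real.coe_toNNReal _ (by positivity)]
    field_simp
    rw [sq_sqrt hq]
    ring
  simp only [PhiQ, deriv_neg_sq_div, iteratedDeriv_two_neg_sq_div, h_avg]
  simp only [stdG, integral_const_add_mul_sq_gaussianReal]
  push_cast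
  ring

theorem isFixedPoint_neg_sq_div_iff {α κ h Δs Δ : ℝ} (hΔ : 0 < Δ) (hΔs : 0 ≤ Δs)
    {q ρ r rb : ℝ} :
    isFixedPoint (fun s => -(s ^ 2) / (2 * Δ)) α κ h Δs (q, ρ, r, rb) ↔
      0 ≤ q ∧ q < ρ ∧ q = (r + h ^ 2) / (2 * κ + r - rb) ^ 2 ∧
        ρ = 1 / (2 * κ + r - rb) + (r + h ^ 2) / (2 * κ + r - rb) ^ 2 ∧
        r = α * (Δs + q) / (Δ + (ρ - q)) ^ 2 ∧
        rb = α * (Δs + q) / (Δ + (ρ - q)) ^ 2 - α / (Δ + (ρ - q)) := by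
  refine and_congr_right fun hq => and_congr_right fun hqρ => ?_
  rw [PhiR_neg_sq_div hΔ α (by linarith) hqρ, PhiQ_neg_sq_div hΔ α (by linarith) hqρ]

theorem eq_pos_root_iff {κ Δ B x : ℝ} (hκ : 0 < κ) (hΔ : 0 < Δ) :
    x = (√(B ^ 2 + 8 * κ * Δ) - B) / (4 * κ) ↔ 0 < x ∧ 2 * κ * x ^ 2 + B * x - Δ = 0 := by
  have h_disc : discrim (2 * κ) B (-Δ) = √(B ^ 2 + 8 * κ * Δ) * √(B ^ 2 + 8 * κ * Δ) := by
    rw [mul_self_sqrt (by positivity), discrim]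
    ring
  have h_abs : |B| < √(B ^ 2 + 8 * κ * Δ) :=
    lt_sqrt_of_sq_lt (by rw [sq_abs]; nlinarith [mul_pos hκ hΔ])
  have h_roots := quadratic_eq_zero_iff (by positivity) h_disc x
  constructor
  · rintro rfl
    refine ⟨div_pos (by linarith [le_abs_self B]) (by positivity), ?_⟩
    linear_combination h_roots.2 (Or.inl (by ring))
  · rintro ⟨hx, h_eq⟩
    rcases h_roots.1 (by linear_combination h_eq) with h_root | h_root
    · rw [h_root]
      ring
    · have : x < 0 := by
        rw [h_root]
        exact div_neg_of_neg_of_pos (by linarith [neg_abs_le B]) (by positivity)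
      linarith

theorem eq_one_div_iff_eq_pos_root {α κ Δ x : ℝ} (hκ : 0 < κ) (hΔ : 0 < Δ) (hx : 0 < x) :
    x = 1 / (2 * κ + α / (Δ + x)) ↔
      x = (√((2 * κ * Δ + α - 1) ^ 2 + 8 * κ * Δ) - (2 * κ * Δ + α - 1)) / (4 * κ) := by
  have hΔx : 0 < Δ + x := by linarith
  have h_mul : x * (2 * κ + α / (Δ + x)) - 1 =
      (2 * κ * x ^ 2 + (2 * κ * Δ + α - 1) * x - Δ) / (Δ + x) := by
    field_simp
    ring
  rw [eq_pos_root_iff hκ hΔ, and_iff_right hx]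
  calc x = 1 / (2 * κ + α / (Δ + x)) ↔ x * (2 * κ + α / (Δ + x)) - 1 = 0 := by
        rw [sub_eq_zero, mul_eq_one_iff_inv_eq₀ hx.ne', inv_eq_iff_eq_inv, one_div]
    _ ↔ 2 * κ * x ^ 2 + (2 * κ * Δ + α - 1) * x - Δ = 0 := by
        rw [h_mul, div_eq_zero_iff, or_iff_left hΔx.ne']

theorem add_sq_sub_mul_sq_pos_of_eq_pos_root {α κ Δ c : ℝ} (hκ : 0 < κ) (hΔ : 0 < Δ)
    (hc : c = (√((2 * κ * Δ + α - 1) ^ 2 + 8 * κ * Δ) - (2 * κ * Δ + α - 1)) / (4 * κ)) :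
    0 < (Δ + c) ^ 2 - α * c ^ 2 := by
  obtain ⟨hc_pos, hc_eq⟩ := (eq_pos_root_iff hκ hΔ).1 hc
  have h_factor : (Δ + c) ^ 2 - α * c ^ 2 = (Δ + c) * (Δ + 2 * κ * c ^ 2) := by
    linear_combination (-c) * hc_eq
  rw [h_factor]
  positivity

theorem eq_mul_sq_iff_eq_div {α Δ Δs h c q : ℝ} (hΔc : Δ + c ≠ 0)
    (hden : (Δ + c) ^ 2 - α * c ^ 2 ≠ 0) :
    q = (α * (Δs + q) / (Δ + c) ^ 2 + h ^ 2) * c ^ 2 ↔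
      q = c ^ 2 * (h ^ 2 * (Δ + c) ^ 2 + Δs * α) / ((Δ + c) ^ 2 - α * c ^ 2) := by
  rw [eq_div_iff hden]
  field_simp
  constructor <;> intro h_eq <;> linear_combination h_eq

theorem fixedPoint_equations_iff {α κ h Δs Δ c : ℝ} (hκ : 0 < κ) (hΔ : 0 < Δ) (hα : 0 ≤ α)
    (hΔs : 0 ≤ Δs)
    (hc : c = (√((2 * κ * Δ + α - 1) ^ 2 + 8 * κ * Δ) - (2 * κ * Δ + α - 1)) / (4 * κ))
    {q ρ r rb : ℝ} :
    (0 ≤ q ∧ q < ρ ∧ q = (r + h ^ 2) / (2 * κ + r - rb) ^ 2 ∧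
      ρ = 1 / (2 * κ + r - rb) + (r + h ^ 2) / (2 * κ + r - rb) ^ 2 ∧
      r = α * (Δs + q) / (Δ + (ρ - q)) ^ 2 ∧
      rb = α * (Δs + q) / (Δ + (ρ - q)) ^ 2 - α / (Δ + (ρ - q))) ↔
    (q = c ^ 2 * (h ^ 2 * (Δ + c) ^ 2 + Δs * α) / ((Δ + c) ^ 2 - α * c ^ 2) ∧ ρ = q + c ∧
      r = α * (Δs + q) / (Δ + c) ^ 2 ∧ rb = r - α / (Δ + c)) := by
  have hc_pos : 0 < c := ((eq_pos_root_iff hκ hΔ).1 hc).1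
  have hD : 2 * κ + α / (Δ + c) = 1 / c := by
    rw [← one_div_one_div (2 * κ + _), ← (eq_one_div_iff_eq_pos_root hκ hΔ hc_pos).2 hc]
  have hden := add_sq_sub_mul_sq_pos_of_eq_pos_root hκ hΔ hc
  have h_linear := eq_mul_sq_iff_eq_div (Δs := Δs) (h := h) (q := q)
    (by linarith : 0 < Δ + c).ne' hden.ne'
  constructor
  · rintro ⟨-, hqρ, hq_eq, hρ_eq, hr, hrb⟩
    have h_gap : ρ - q = 1 / (2 * κ + α / (Δ + (ρ - q))) := by
      rw [show α / (Δ + (ρ - q)) = r - rb by rw [hrb, hr]; ring]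
      linear_combination hρ_eq - hq_eq
    have hρq : ρ - q = c :=
      ((eq_one_div_iff_eq_pos_root hκ hΔ (sub_pos.2 hqρ)).1 h_gap).trans hc.symm
    rw [← hr, hρq] at hrb
    rw [hρq] at hr
    rw [show 2 * κ + r - rb = 1 / c by rw [hrb, ← hD]; ring, one_div, inv_pow, div_inv_eq_mul,
      hr] at hq_eq
    exact ⟨h_linear.1 hq_eq, by linarith, hr, hrb⟩
  · rintro ⟨hq, hρ, hr, hrb⟩
    have hρq : ρ - q = c := by rw [hρ]; ring
    have hD_rb : 2 * κ + r - rb = 1 / c := by rw [hrb, ← hD]; ring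
    have hq_eq : q = (r + h ^ 2) / (2 * κ + r - rb) ^ 2 := by
      rw [hD_rb, one_div, inv_pow, div_inv_eq_mul, hr]
      exact h_linear.2 hq
    refine ⟨?_, by linarith, hq_eq, ?_, by rw [hρq, hr], by rw [hρq, hrb, hr]⟩
    · rw [hq]
      exact div_nonneg (by positivity) hden.le
    · rw [← hq_eq, hD_rb, one_div_one_div, hρ, add_comm]

/-- quadratic loss example: for `u(s) = −s²/(2Δ)` the fixed-point
system has the unique solution given by the explicit formulas, and `q > 0`
whenever `h² + Δ* > 0`. -/
theorem quadratic_loss_unique_fixed_point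
    (α κ h Δs Δ : ℝ) (hα : 0 < α) (hκ : 0 < κ) (hΔs : 0 ≤ Δs) (hΔ : 0 < Δ)
    (u : ℝ → ℝ) (hu : u = fun s => -(s ^ 2) / (2 * Δ))
    (c q ρ r rb : ℝ)
    (hc : c = (Real.sqrt ((2 * κ * Δ + α - 1) ^ 2 + 8 * κ * Δ) - (2 * κ * Δ + α - 1)) / (4 * κ))
    (hq : q = c ^ 2 * (h ^ 2 * (Δ + c) ^ 2 + Δs * α) / ((Δ + c) ^ 2 - α * c ^ 2))
    (hρ : ρ = q + c)
    (hr : r = α * (Δs + q) / (Δ + c) ^ 2)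
    (hrb : rb = r - α / (Δ + c)) :
    isFixedPoint u α κ h Δs (q, ρ, r, rb) ∧
    (∀ p : ℝ × ℝ × ℝ × ℝ, isFixedPoint u α κ h Δs p → p = (q, ρ, r, rb)) ∧
    (0 < h ^ 2 + Δs → 0 < q) := by
  subst hu
  have h_iff : ∀ p, isFixedPoint (fun s => -(s ^ 2) / (2 * Δ)) α κ h Δs p ↔ p = (q, ρ, r, rb) := by
    rintro ⟨q', ρ', r', rb'⟩
    rw [isFixedPoint_neg_sq_div_iff hΔ hΔs, fixedPoint_equations_iff hκ hΔ hα.le hΔs hc, ← hq]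
    subst hρ hr hrb
    simp only [Prod.mk.injEq]
    constructor <;> rintro ⟨rfl, rfl, rfl, rfl⟩ <;> simp
  refine ⟨(h_iff _).2 rfl, fun p => (h_iff p).1, fun h_pos => ?_⟩
  have hc_pos : 0 < c := ((eq_pos_root_iff hκ hΔ).1 hc).1
  have h_num : 0 < h ^ 2 * (Δ + c) ^ 2 + Δs * α := by
    rcases (sq_nonneg h).eq_or_lt with h0 | h0
    · rw [← h0] at h_pos ⊢
      simpa using mul_pos (by simpa using h_pos) hα
    · exact add_pos_of_pos_of_nonneg (mul_pos h0 (by positivity)) (by positivity)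
  rw [hq]
  exact div_pos (mul_pos (by positivity) h_num) (add_sq_sub_mul_sq_pos_of_eq_pos_root hκ hΔ hc)

end
end

section
/- Let 0≤q<ρ and 0≤r̄≤r. If (q,ρ,r,r̄) satisfies the two equations q=(r+h²)/(2κ+r−r̄)² and ρ=1/(2κ+r−r̄)+(r+h²)/(2κ+r−r̄)², then F̄(q,ρ,r,r̄) = F(q,ρ), i.e. the four-variable functional evaluated at such a point equals the two-variable replica-symmetric free energy functional. -/
open MeasureTheory ProbabilityTheory Real Filter

noncomputable section

/-- The four-variable functional `F̄(q,ρ,r,r̄)`. -/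
def Fbar (u : ℝ → ℝ) (α κ h Δs q ρ r rb : ℝ) : ℝ :=
  α * (∫ zt, Real.log (∫ ξ, Real.exp (u (theta Δs q ρ zt ξ)) ∂stdG) ∂stdG) +
  (1 / 2) * ((r + h ^ 2) / (2 * κ + r - rb) - Real.log (2 * κ + r - rb) +
    r * q - rb * ρ + Real.log (2 * Real.pi))

/- Subtracting the two fixed-point equations gives `ρ - q = (2κ + r - r̄)⁻¹`, and this is all
that is needed: with `t := ρ - q` and `2κ = t⁻¹ - r + r̄`, both brackets reduce to
`log t + h² t + (r - r̄) ρ`, an identity of ring arithmetic with `t⁻¹` as an atom. -/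

lemma sub_eq_inv_of_fixedPoint_eqs {κ h q ρ r rb : ℝ}
    (h1 : q = (r + h ^ 2) / (2 * κ + r - rb) ^ 2)
    (h2 : ρ = 1 / (2 * κ + r - rb) + (r + h ^ 2) / (2 * κ + r - rb) ^ 2) :
    ρ - q = (2 * κ + r - rb)⁻¹ := by
  rw [h1, h2]
  ring

theorem Fbar_eq_Ffunc_of_sub_eq_inv (u : ℝ → ℝ) (α κ h Δs : ℝ) {q ρ r rb : ℝ}
    (hρq : ρ - q = (2 * κ + r - rb)⁻¹) :
    Fbar u α κ h Δs q ρ r rb = Ffunc u α κ h Δs q ρ := by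
  have hc : 2 * κ + r - rb = (ρ - q)⁻¹ := by rw [hρq, inv_inv]
  have hκ : 2 * κ = (ρ - q)⁻¹ - r + rb := by linarith
  unfold Fbar Ffunc
  rw [hc, Real.log_inv, div_inv_eq_mul, div_eq_mul_inv ρ, hκ]
  ring

theorem Fbar_eq_Ffunc_general
    (α κ h Δs : ℝ)
    (u : ℝ → ℝ)
    (q ρ r rb : ℝ)
    (h1 : q = (r + h ^ 2) / (2 * κ + r - rb) ^ 2)
    (h2 : ρ = 1 / (2 * κ + r - rb) + (r + h ^ 2) / (2 * κ + r - rb) ^ 2) :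
    Fbar u α κ h Δs q ρ r rb = Ffunc u α κ h Δs q ρ :=
  Fbar_eq_Ffunc_of_sub_eq_inv u α κ h Δs (sub_eq_inv_of_fixedPoint_eqs h1 h2)

/-- on the domain `0 ≤ q < ρ`, `0 ≤ r̄ ≤ r`, if `(q,ρ,r,r̄)`
satisfies the first two fixed-point equations then `F̄(q,ρ,r,r̄) = F(q,ρ)`. -/
theorem Fbar_eq_Ffunc
    (α κ h Δs : ℝ) (hα : 0 < α) (hκ : 0 < κ) (hΔs : 0 ≤ Δs)
    (u : ℝ → ℝ) (hmeas : Measurable u) (hneg : ∀ s, u s ≤ 0)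
    (q ρ r rb : ℝ) (hq : 0 ≤ q) (hqρ : q < ρ) (hrb : 0 ≤ rb) (hrbr : rb ≤ r)
    (h1 : q = (r + h ^ 2) / (2 * κ + r - rb) ^ 2)
    (h2 : ρ = 1 / (2 * κ + r - rb) + (r + h ^ 2) / (2 * κ + r - rb) ^ 2) :
    Fbar u α κ h Δs q ρ r rb = Ffunc u α κ h Δs q ρ :=
  Fbar_eq_Ffunc_general α κ h Δs u q ρ r rb h1 h2

end
end

section
/- If |λ| + ‖Ḡ‖_op²·|η| ≤ κ/(dn), then the map σ⃗ ↦ (κ/2)‖σ⃗‖² − λN R(σ⃗) − ηN Q(σ⃗) from (ℝ^N)ⁿ to ℝ is convex. -/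
open MeasureTheory Real

noncomputable section

/-- `S_k(σ) = (Ḡ σ)_k` for a given matrix `Ḡ`. -/
def SkB {M N : ℕ} (Gb : Fin M → Fin N → ℝ) (σ : Fin N → ℝ) (k : Fin M) : ℝ :=
  ∑ i, Gb k i * σ i

/-- Euclidean norm of a vector in `ℝⁿ`. -/
def vnorm {n : ℕ} (s : Fin n → ℝ) : ℝ := Real.sqrt (∑ ℓ, (s ℓ) ^ 2)

/-- Euclidean norm of a replica configuration `σ⃗ ∈ (ℝ^N)ⁿ`. -/
def cnorm {n N : ℕ} (σv : Fin n → Fin N → ℝ) : ℝ := Real.sqrt (∑ ℓ, ∑ i, (σv ℓ i) ^ 2)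

/-- Generalized overlap `R(σ⃗) = (1/N) Σ_i φ(σ_i¹,…,σ_iⁿ)`. -/
def Rgen {n N : ℕ} (φ : (Fin n → ℝ) → ℝ) (σv : Fin n → Fin N → ℝ) : ℝ :=
  (∑ i, φ (fun ℓ => σv ℓ i)) / (N : ℝ)

/-- Generalized overlap `Q(σ⃗) = (1/N) Σ_k ψ(S_k(σ¹)+z_k,…,S_k(σⁿ)+z_k)`. -/
def QgenB {n M N : ℕ} (ψ : (Fin n → ℝ) → ℝ) (Gb : Fin M → Fin N → ℝ) (z : Fin M → ℝ)
    (σv : Fin n → Fin N → ℝ) : ℝ :=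
  (∑ k, ψ (fun ℓ => SkB Gb (σv ℓ) k + z k)) / (N : ℝ)

/-- Operator norm of an `M × N` matrix acting on Euclidean spaces. -/
def opNorm {M N : ℕ} (A : Fin M → Fin N → ℝ) : ℝ :=
  ‖(LinearMap.toContinuousLinearMap (Matrix.toEuclideanLin (Matrix.of A)))‖

/-! Convexity is tested on lines. Along `t ↦ x + t • v` the second derivative of the function is
`κ ‖v‖² - λ Σᵢ D²φ(vᵢ, vᵢ) - η Σₖ D²ψ((Ḡv)ₖ, (Ḡv)ₖ)`, where `vᵢ = (vᵢ¹, …, vᵢⁿ)` and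
`(Ḡv)ₖ = (S_k(v¹), …, S_k(vⁿ))`. The entrywise Hessian bound gives
`|D²φ(q, q)| ≤ d (Σₗ |qₗ|)² ≤ d n ‖q‖²`, so the two overlap terms are at most `|λ| d n ‖v‖²` and
`|η| d n ‖Ḡ‖²_op ‖v‖²`, and the hypothesis makes their sum at most `κ ‖v‖²`. -/

open Set Finset

section LineDerivatives

variable {E F : Type*} [AddCommGroup E] [Module ℝ E] [AddCommGroup F] [Module ℝ F]

def HasSecondLineDeriv (f : E → ℝ) (f' f'' : E → E → ℝ) : Prop :=
  ∀ x v : E, ∀ t : ℝ, HasDerivAt (fun s : ℝ => f (x + s • v)) (f' (x + t • v) v) t ∧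
    HasDerivAt (fun s : ℝ => f' (x + s • v) v) (f'' (x + t • v) v) t

theorem convexOn_univ_of_forall_line {f : E → ℝ}
    (h : ∀ x v : E, ConvexOn ℝ univ fun t : ℝ => f (x + t • v)) : ConvexOn ℝ univ f := by
  refine ⟨convex_univ, fun x _ y _ a b ha hb hab => ?_⟩
  have h01 := (h x (y - x)).2 (mem_univ 0) (mem_univ 1) ha hb hab
  have hline : x + b • (y - x) = a • x + b • y := by rw [eq_sub_of_add_eq hab]; module
  simpa [hline] using h01

namespace HasSecondLineDeriv

variable {f g : E → ℝ} {f' f'' g' g'' : E → E → ℝ}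

theorem sub (hf : HasSecondLineDeriv f f' f'') (hg : HasSecondLineDeriv g g' g'') :
    HasSecondLineDeriv (fun x => f x - g x) (fun x v => f' x v - g' x v)
      (fun x v => f'' x v - g'' x v) := fun x v t =>
  ⟨(hf x v t).1.sub (hg x v t).1, (hf x v t).2.sub (hg x v t).2⟩

theorem const_mul (c : ℝ) (hf : HasSecondLineDeriv f f' f'') :
    HasSecondLineDeriv (fun x => c * f x) (fun x v => c * f' x v) (fun x v => c * f'' x v) :=
  fun x v t => ⟨(hf x v t).1.const_mul c, (hf x v t).2.const_mul c⟩

theorem sum {ι : Type*} (s : Finset ι) {f : ι → E → ℝ} {f' f'' : ι → E → E → ℝ}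
    (hf : ∀ i ∈ s, HasSecondLineDeriv (f i) (f' i) (f'' i)) :
    HasSecondLineDeriv (fun x => ∑ i ∈ s, f i x) (fun x v => ∑ i ∈ s, f' i x v)
      (fun x v => ∑ i ∈ s, f'' i x v) := fun x v t =>
  ⟨HasDerivAt.fun_sum fun i hi => (hf i hi x v t).1,
    HasDerivAt.fun_sum fun i hi => (hf i hi x v t).2⟩

theorem comp_affine (hf : HasSecondLineDeriv f f' f'') {a a' : F → E}
    (ha : ∀ x v (t : ℝ), a (x + t • v) = a x + t • a' v) :
    HasSecondLineDeriv (fun x => f (a x)) (fun x v => f' (a x) (a' v))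
      (fun x v => f'' (a x) (a' v)) := by
  intro x v t
  simp only [ha]
  exact hf (a x) (a' v) t

theorem convexOn_univ (hf : HasSecondLineDeriv f f' f'') (hf'' : ∀ x v, 0 ≤ f'' x v) :
    ConvexOn ℝ univ f := by
  refine convexOn_univ_of_forall_line fun x v => ?_
  have hline (t : ℝ) : HasDerivAt (fun s : ℝ => f (x + s • v)) (f' (x + t • v) v) t :=
    (hf x v t).1
  refine convexOn_of_hasDerivWithinAt2_nonneg convex_univ
    (fun t _ => (hline t).continuousAt.continuousWithinAt) (fun t _ => (hline t).hasDerivWithinAt)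
    (fun t _ => (hf x v t).2.hasDerivWithinAt) fun t _ => hf'' _ _

end HasSecondLineDeriv

end LineDerivatives

theorem hasDerivAt_line {E : Type*} [NormedAddCommGroup E] [NormedSpace ℝ E] (x v : E) (t : ℝ) :
    HasDerivAt (fun s : ℝ => x + s • v) v t := by
  simpa using ((hasDerivAt_id t).smul_const v).const_add x

theorem hasSecondLineDeriv_sq :
    HasSecondLineDeriv (fun s : ℝ => s ^ 2) (fun s v => 2 * s * v) (fun _ v => 2 * v * v) := by
  intro x v t
  constructor
  · simpa using (hasDerivAt_line x v t).fun_pow 2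
  · exact ((hasDerivAt_line x v t).const_mul 2).mul_const v

theorem hasSecondLineDeriv_sum_sum_sq {ι ι' : Type*} [Fintype ι] [Fintype ι'] :
    HasSecondLineDeriv (fun x : ι → ι' → ℝ => ∑ ℓ, ∑ i, x ℓ i ^ 2)
      (fun x v => ∑ ℓ, ∑ i, 2 * x ℓ i * v ℓ i)
      (fun _ v => ∑ ℓ, ∑ i, 2 * v ℓ i * v ℓ i) :=
  .sum univ fun ℓ _ => .sum univ fun i _ =>
    hasSecondLineDeriv_sq.comp_affine (a := fun x : ι → ι' → ℝ => x ℓ i) fun _ _ _ => rfl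

theorem fderiv_clm_apply_const {𝕜 E F G : Type*} [NontriviallyNormedField 𝕜]
    [NormedAddCommGroup E] [NormedSpace 𝕜 E] [NormedAddCommGroup F] [NormedSpace 𝕜 F]
    [NormedAddCommGroup G] [NormedSpace 𝕜 G] {c : E → F →L[𝕜] G} {x : E}
    (hc : DifferentiableAt 𝕜 c x) (u : E) (w : F) :
    fderiv 𝕜 (fun y => c y w) x u = fderiv 𝕜 c x u w := by
  simp [fderiv_clm_apply hc (differentiableAt_const w)]

theorem ContDiff.hasSecondLineDeriv {E : Type*} [NormedAddCommGroup E] [NormedSpace ℝ E]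
    {f : E → ℝ} (hf : ContDiff ℝ 2 f) :
    HasSecondLineDeriv f (fun x v => fderiv ℝ f x v)
      (fun x v => fderiv ℝ (fderiv ℝ f) x v v) := by
  have hf' : Differentiable ℝ (fderiv ℝ f) :=
    (hf.fderiv_right (m := 1) le_rfl).differentiable one_ne_zero
  intro x v t
  refine ⟨(hf.differentiable two_ne_zero _).hasFDerivAt.comp_hasDerivAt t
    (hasDerivAt_line x v t), ?_⟩
  simpa using ((hf' _).hasFDerivAt.comp_hasDerivAt t (hasDerivAt_line x v t)).clm_apply
    (hasDerivAt_const t v)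

theorem ContinuousLinearMap.abs_apply_self_le {ι : Type*} [Fintype ι] [DecidableEq ι]
    (B : (ι → ℝ) →L[ℝ] (ι → ℝ) →L[ℝ] ℝ) {d : ℝ} (hd : 0 ≤ d)
    (hB : ∀ l l', |B (Pi.single l 1) (Pi.single l' 1)| ≤ d) (q : ι → ℝ) :
    |B q q| ≤ d * Fintype.card ι * ∑ l, q l ^ 2 := by
  have hexp : B q q = ∑ l, ∑ l', q l * q l' * B (Pi.single l 1) (Pi.single l' 1) := by
    conv_lhs => rw [pi_eq_sum_univ' q]
    simp only [map_sum, map_smul, _root_.sum_apply, smul_apply, smul_eq_mul, mul_sum]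
    rw [sum_comm]
    exact sum_congr rfl fun _ _ => sum_congr rfl fun _ _ => by ring
  calc |B q q| ≤ ∑ l, ∑ l', |q l| * |q l'| * d := by
        rw [hexp]
        refine (abs_sum_le_sum_abs _ _).trans (sum_le_sum fun l _ => ?_)
        refine (abs_sum_le_sum_abs _ _).trans (sum_le_sum fun l' _ => ?_)
        rw [abs_mul, abs_mul]
        exact mul_le_mul_of_nonneg_left (hB l l') (by positivity)
    _ = d * (∑ l, |q l|) ^ 2 := by
        rw [sq, sum_mul_sum, mul_sum]
        refine sum_congr rfl fun l _ => ?_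
        rw [mul_sum]
        exact sum_congr rfl fun l' _ => by ring
    _ ≤ d * (Fintype.card ι * ∑ l, q l ^ 2) := by
        gcongr
        simpa using sq_sum_le_card_mul_sum_sq (s := univ) (f := fun l => |q l|)
    _ = d * Fintype.card ι * ∑ l, q l ^ 2 := by ring

theorem mul_le_mul_of_abs_le {α : Type*} [Ring α] [LinearOrder α] [IsStrictOrderedRing α]
    {a b A B : α} (ha : |a| ≤ A) (hb : |b| ≤ B) : a * b ≤ A * B :=
  (le_abs_self _).trans <| (abs_mul a b).trans_le <|
    mul_le_mul ha hb (abs_nonneg b) ((abs_nonneg a).trans ha)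

theorem exists_hasSecondLineDeriv_sum_comp {E ι J : Type*} [AddCommGroup E] [Module ℝ E]
    [Fintype ι] [DecidableEq ι] [Fintype J] {h : (ι → ℝ) → ℝ} (hh : ContDiff ℝ 2 h)
    {d : ℝ} (hd : 0 ≤ d)
    (hh2 : ∀ s l l',
      |fderiv ℝ (fun y => fderiv ℝ h y (Pi.single l' 1)) s (Pi.single l 1)| ≤ d)
    {a a' : J → E → ι → ℝ}
    (ha : ∀ j x v (t : ℝ), a j (x + t • v) = a j x + t • a' j v) :
    ∃ f' f'' : E → E → ℝ, HasSecondLineDeriv (fun x => ∑ j, h (a j x)) f' f'' ∧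
      ∀ x v, |f'' x v| ≤ d * Fintype.card ι * ∑ j, ∑ l, a' j v l ^ 2 :=
  ⟨_, _, HasSecondLineDeriv.sum univ fun j _ => hh.hasSecondLineDeriv.comp_affine (ha j),
    fun x v => (abs_sum_le_sum_abs _ _).trans <| by
      rw [mul_sum]
      refine sum_le_sum fun j _ =>
        (fderiv ℝ (fderiv ℝ h) _).abs_apply_self_le hd (fun l l' => ?_) _
      rw [← fderiv_clm_apply_const ((hh.fderiv_right le_rfl).differentiable one_ne_zero _)]
      exact hh2 _ l l'⟩

theorem SkB_add_smul {M N : ℕ} (Gb : Fin M → Fin N → ℝ) (u w : Fin N → ℝ) (t : ℝ)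
    (k : Fin M) :
    SkB Gb (u + t • w) k = SkB Gb u k + t * SkB Gb w k := by
  simp only [SkB, Pi.add_apply, Pi.smul_apply, smul_eq_mul, mul_add, sum_add_distrib, mul_sum]
  congr 1
  exact sum_congr rfl fun i _ => by ring

theorem sum_sq_SkB_le {M N : ℕ} (Gb : Fin M → Fin N → ℝ) (u : Fin N → ℝ) :
    ∑ k, SkB Gb u k ^ 2 ≤ opNorm Gb ^ 2 * ∑ j, u j ^ 2 := by
  set A := LinearMap.toContinuousLinearMap (Matrix.toEuclideanLin (Matrix.of Gb))
  have hAu : ‖A (WithLp.toLp 2 u)‖ ^ 2 = ∑ k, SkB Gb u k ^ 2 :=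
    EuclideanSpace.real_norm_sq_eq _
  have hu : ‖WithLp.toLp 2 u‖ ^ 2 = ∑ j, u j ^ 2 := EuclideanSpace.real_norm_sq_eq _
  rw [← hAu, ← hu, opNorm, ← mul_pow]
  exact pow_le_pow_left₀ (norm_nonneg _) (A.le_opNorm _) 2

section Overlaps

variable {n N M : ℕ} {d : ℝ} {h : (Fin n → ℝ) → ℝ}

theorem exists_hasSecondLineDeriv_sum_replicas (hd : 0 ≤ d) (hh : ContDiff ℝ 2 h)
    (hh2 : ∀ s l l',
      |fderiv ℝ (fun y => fderiv ℝ h y (Pi.single l' 1)) s (Pi.single l 1)| ≤ d) :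
    ∃ f' f'', HasSecondLineDeriv
      (fun σv : Fin n → Fin N → ℝ => ∑ i, h fun ℓ => σv ℓ i) f' f'' ∧
      ∀ x v, |f'' x v| ≤ d * n * ∑ ℓ, ∑ i, v ℓ i ^ 2 := by
  obtain ⟨f', f'', hf, hf''⟩ := exists_hasSecondLineDeriv_sum_comp hh hd hh2
    (a := fun (i : Fin N) (σv : Fin n → Fin N → ℝ) ℓ => σv ℓ i) fun _ _ _ _ => rfl
  refine ⟨f', f'', hf, fun x v => (hf'' x v).trans_eq ?_⟩
  rw [Fintype.card_fin, sum_comm]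

theorem exists_hasSecondLineDeriv_sum_SkB (hd : 0 ≤ d) (hh : ContDiff ℝ 2 h)
    (hh2 : ∀ s l l',
      |fderiv ℝ (fun y => fderiv ℝ h y (Pi.single l' 1)) s (Pi.single l 1)| ≤ d)
    (Gb : Fin M → Fin N → ℝ) (z : Fin M → ℝ) :
    ∃ f' f'', HasSecondLineDeriv
      (fun σv : Fin n → Fin N → ℝ => ∑ k, h fun ℓ => SkB Gb (σv ℓ) k + z k) f' f'' ∧
      ∀ x v, |f'' x v| ≤ d * n * (opNorm Gb ^ 2 * ∑ ℓ, ∑ i, v ℓ i ^ 2) := by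
  obtain ⟨f', f'', hf, hf''⟩ := exists_hasSecondLineDeriv_sum_comp hh hd hh2
    (a := fun k (σv : Fin n → Fin N → ℝ) ℓ => SkB Gb (σv ℓ) k + z k)
    (a' := fun k v ℓ => SkB Gb (v ℓ) k)
    fun k x v t => funext fun ℓ => by
      simp only [Pi.add_apply, Pi.smul_apply, SkB_add_smul]
      ring
  refine ⟨f', f'', hf, fun x v => (hf'' x v).trans ?_⟩
  rw [Fintype.card_fin]
  refine mul_le_mul_of_nonneg_left ?_ (by positivity)
  rw [sum_comm, mul_sum]
  exact sum_le_sum fun ℓ _ => sum_sq_SkB_le Gb (v ℓ)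

end Overlaps

theorem coupled_overlap_convexity_general
    (n N M : ℕ) (hn : 1 ≤ n) (κ d : ℝ) (hd : 0 < d)
    (Gb : Fin M → Fin N → ℝ) (z : Fin M → ℝ)
    (φ ψ : (Fin n → ℝ) → ℝ) (hφ : ContDiff ℝ 2 φ) (hψ : ContDiff ℝ 2 ψ)
    (hφ2 : ∀ (s : Fin n → ℝ) (l l' : Fin n),
      |fderiv ℝ (fun y => fderiv ℝ φ y (Pi.single l' 1)) s (Pi.single l 1)| ≤ d)
    (hψ2 : ∀ (s : Fin n → ℝ) (l l' : Fin n),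
      |fderiv ℝ (fun y => fderiv ℝ ψ y (Pi.single l' 1)) s (Pi.single l 1)| ≤ d)
    (lam η : ℝ)
    (hcond : |lam| + (opNorm Gb) ^ 2 * |η| ≤ κ / (d * n)) :
    ConvexOn ℝ Set.univ (fun σv : Fin n → Fin N → ℝ =>
      κ / 2 * (∑ ℓ, ∑ i, (σv ℓ i) ^ 2) - lam * (N : ℝ) * Rgen φ σv -
        η * (N : ℝ) * QgenB ψ Gb z σv) := by
  have hκ : (|lam| + opNorm Gb ^ 2 * |η|) * (d * n) ≤ κ :=
    (le_div_iff₀ (mul_pos hd (by exact_mod_cast hn))).1 hcond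
  -- `N * (X / N) = (N / N) * X` with `N / N ∈ {0, 1}`, which also covers `N = 0`
  set c : ℝ := (N : ℝ) / N
  have hc : |c| ≤ 1 := by rw [abs_of_nonneg (by positivity)]; exact div_self_le_one _
  have hF : (fun σv : Fin n → Fin N → ℝ =>
      κ / 2 * (∑ ℓ, ∑ i, (σv ℓ i) ^ 2) - lam * (N : ℝ) * Rgen φ σv -
        η * (N : ℝ) * QgenB ψ Gb z σv) =
      fun σv => κ / 2 * (∑ ℓ, ∑ i, (σv ℓ i) ^ 2) -
        lam * c * ∑ i, φ (fun ℓ => σv ℓ i) -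
        η * c * ∑ k, ψ (fun ℓ => SkB Gb (σv ℓ) k + z k) := by
    funext σv
    simp only [Rgen, QgenB, c]
    ring
  rw [hF]
  obtain ⟨R', R'', hR, hR''⟩ := exists_hasSecondLineDeriv_sum_replicas (N := N) hd.le hφ hφ2
  obtain ⟨Q', Q'', hQ, hQ''⟩ := exists_hasSecondLineDeriv_sum_SkB hd.le hψ hψ2 Gb z
  refine (((hasSecondLineDeriv_sum_sum_sq.const_mul (κ / 2)).sub
    (hR.const_mul (lam * c))).sub (hQ.const_mul (η * c))).convexOn_univ fun x v => ?_
  set V := ∑ ℓ, ∑ i, v ℓ i ^ 2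
  have hquad : ∑ ℓ, ∑ i, 2 * v ℓ i * v ℓ i = 2 * V := by
    simp only [V, mul_sum]
    exact sum_congr rfl fun _ _ => sum_congr rfl fun _ _ => by ring
  have hc' (a : ℝ) : |a * c| ≤ |a| :=
    (abs_mul a c).trans_le (mul_le_of_le_one_right (abs_nonneg a) hc)
  rw [hquad]
  linarith [mul_le_mul_of_abs_le (hc' lam) (hR'' x v), mul_le_mul_of_abs_le (hc' η) (hQ'' x v),
    mul_le_mul_of_nonneg_right hκ (by positivity : 0 ≤ V)]

/-- Lemma 4.5, convexity: if `|λ| + ‖Ḡ‖_op²|η| ≤ κ/(dn)`, the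
map `σ⃗ ↦ (κ/2)‖σ⃗‖² − λN R(σ⃗) − ηN Q(σ⃗)` is convex. -/
theorem coupled_overlap_convexity
    (n N M : ℕ) (hn : 1 ≤ n) (κ d : ℝ) (hκ : 0 < κ) (hd : 0 < d)
    (Gb : Fin M → Fin N → ℝ) (z : Fin M → ℝ)
    (φ ψ : (Fin n → ℝ) → ℝ) (hφ : ContDiff ℝ 2 φ) (hψ : ContDiff ℝ 2 ψ)
    (hφ2 : ∀ (s : Fin n → ℝ) (l l' : Fin n),
      |fderiv ℝ (fun y => fderiv ℝ φ y (Pi.single l' 1)) s (Pi.single l 1)| ≤ d)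
    (hψ2 : ∀ (s : Fin n → ℝ) (l l' : Fin n),
      |fderiv ℝ (fun y => fderiv ℝ ψ y (Pi.single l' 1)) s (Pi.single l 1)| ≤ d)
    (lam η : ℝ)
    (hcond : |lam| + (opNorm Gb) ^ 2 * |η| ≤ κ / (d * n)) :
    ConvexOn ℝ Set.univ (fun σv : Fin n → Fin N → ℝ =>
      κ / 2 * (∑ ℓ, ∑ i, (σv ℓ i) ^ 2) - lam * (N : ℝ) * Rgen φ σv -
        η * (N : ℝ) * QgenB ψ Gb z σv) :=
  coupled_overlap_convexity_general n N M hn κ d hd Gb z φ ψ hφ hψ hφ2 hψ2 lam η hcond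

end
end
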